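/- For all n ≥ 1 and 0 ≤ k ≤ n-1, the number of contained k-Naples (n,n)-parking functions equals (n+1)^{n-1}, independent of k. -/

import Mathlib

/-- The first unoccupied spot `s` with `p ≤ s ≤ n`, if any. -/
def forwardSpot (n : ℕ) (occ : Finset ℕ) (p : ℕ) : Option ℕ :=
  (List.range' p (n + 1 - p)).find? (fun s => decide (s ∉ occ))

/-- Classical (forward-only) parking process: cars park one by one, each at the
first free spot `≥` its preference; returns the final occupied set if all park. -/
def classicalPark (n : ℕ) : List ℕ → Finset ℕ → Option (Finset ℕ)
  | [], occ => some occ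
  | p :: rest, occ =>
    match forwardSpot n occ p with
    | none => none
    | some s => classicalPark n rest (insert s occ)

/-- Backward candidates `p-1, p-2, …, p-k` that are at least `1`. -/
def backwardCandidates (k p : ℕ) : List ℕ :=
  ((List.range k).map (fun i => p - (i + 1))).filter (fun s => decide (1 ≤ s))

/-- The spot where a car with preference `p` parks under the `k`-Naples rule. -/
def naplesSpot (n k : ℕ) (occ : Finset ℕ) (p : ℕ) : Option ℕ :=
  if p ∈ occ then
    match (backwardCandidates k p).find? (fun s => decide (s ∉ occ)) with
    | some s => some s
    | none => forwardSpot n occ p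
  else some p

/-- `k`-Naples parking process; returns the final occupied set if all cars park. -/
def naplesPark (n k : ℕ) : List ℕ → Finset ℕ → Option (Finset ℕ)
  | [], occ => some occ
  | p :: rest, occ =>
    match naplesSpot n k occ p with
    | none => none
    | some s => naplesPark n k rest (insert s occ)

/-- All cars park under the `k`-Naples rule and no car with preference `p ≤ k`
finds all of `1, …, p` occupied (no car exits the lot searching backward). -/
def naplesContainedAux (n k : ℕ) : List ℕ → Finset ℕ → Bool
  | [], _ => true
  | p :: rest, occ =>
    (decide (p ≤ k → ¬ Finset.Icc 1 p ⊆ occ)) &&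
    match naplesSpot n k occ p with
    | none => false
    | some s => naplesContainedAux n k rest (insert s occ)

/-- The (1-based) preference list of `a : Fin m → Fin n`. -/
def prefList {m n : ℕ} (a : Fin m → Fin n) : List ℕ :=
  (List.ofFn a).map (fun x => (x : ℕ) + 1)

/-- The set of classical `(m,n)`-parking functions. -/
def PFset (m n : ℕ) : Finset (Fin m → Fin n) :=
  Finset.univ.filter (fun a => (classicalPark n (prefList a) ∅).isSome)

/-- The set of `k`-Naples `(m,n)`-parking functions. -/
def NPFset (m n k : ℕ) : Finset (Fin m → Fin n) :=
  Finset.univ.filter (fun a => (naplesPark n k (prefList a) ∅).isSome)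

/-- The set of contained `k`-Naples `(m,n)`-parking functions. -/
def Bset (m n k : ℕ) : Finset (Fin m → Fin n) :=
  Finset.univ.filter (fun a => naplesContainedAux n k (prefList a) ∅)

/-- The set of `k`-left obstructed `(m,n)`-parking functions: `m` cars on
`n + k` spots whose first `k` spots are obstructed, forward-only rule. -/
def LPFset (m n k : ℕ) : Finset (Fin m → Fin (n + k)) :=
  Finset.univ.filter (fun a => (classicalPark (n + k) (prefList a) (Finset.Icc 1 k)).isSome)

/-!
Put the `n` spots on the circle `ℤ/(n+1)`, the extra spot `0` sitting between `n` and `1`,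
and let cars park circularly by the `k`-Naples rule: try `p`, then `p - 1, …, p - k`, then
forward all the way round. A car of the contained linear process that would leave the lot,
backward past `1` or forward past `n`, lands on `0` instead, and every other car parks
where it does linearly. So contained `k`-Naples parking functions are exactly the circular
preference functions leaving `0` empty (these never prefer `0`).

Circular parking of `n` cars always succeeds and leaves exactly one spot empty, and rotating
all preferences by `c` rotates that spot by `c`. Hence the `(n+1)^n` circular preference
functions are spread evenly over the `n + 1` possible empty spots.
-/

open Finset

theorem mem_backwardCandidates {k p x : ℕ} :
    x ∈ backwardCandidates k p ↔ 1 ≤ x ∧ x < p ∧ p ≤ x + k := by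
  simp only [backwardCandidates, List.mem_filter, List.mem_map, List.mem_range,
    decide_eq_true_eq]
  constructor
  · rintro ⟨⟨i, hi, rfl⟩, hx⟩
    omega
  · rintro ⟨h1, hp, hk⟩
    exact ⟨⟨p - x - 1, by omega, by omega⟩, h1⟩

theorem backwardCandidates_eq_map_range (k p : ℕ) :
    backwardCandidates k p = (List.range (min k (p - 1))).map fun i => p - (i + 1) := by
  have hk : k = min k (p - 1) + (k - min k (p - 1)) := by omega
  rw [backwardCandidates, hk, List.range_add, List.map_append, List.filter_append,
    List.filter_eq_self.mpr, List.filter_eq_nil_iff.mpr, List.append_nil, ← hk]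
  · simp only [List.map_map, List.mem_map, List.mem_range, decide_eq_true_eq]
    rintro _ ⟨i, _, rfl⟩
    simp only [Function.comp_apply]
    omega
  · simp only [List.mem_map, List.mem_range, decide_eq_true_eq]
    rintro _ ⟨i, hi, rfl⟩
    omega

/-- The spots a car preferring `p` inspects, in order, under the contained rule: when
`p ≤ k` the forward search is never reached, since a car whose backward search fails then
leaves the lot. -/
def effectiveCandidates (n k p : ℕ) : List ℕ :=
  p :: (backwardCandidates k p ++ if k < p then List.range' (p + 1) (n - p) else [])

theorem mem_effectiveCandidates {n k p x : ℕ} (hp : p ∈ Icc 1 n)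
    (hx : x ∈ effectiveCandidates n k p) : x ∈ Icc 1 n := by
  rw [mem_Icc] at hp ⊢
  simp only [effectiveCandidates, List.mem_cons, List.mem_append, mem_backwardCandidates] at hx
  split_ifs at hx <;> simp only [List.mem_range'_1, List.not_mem_nil, or_false] at hx <;> omega

theorem naplesSpot_eq_find? (n k : ℕ) (occ : Finset ℕ) (p : ℕ) :
    naplesSpot n k occ p =
      (p :: (backwardCandidates k p ++ List.range' p (n + 1 - p))).find? (· ∉ occ) := by
  unfold naplesSpot
  by_cases hp : p ∈ occ
  · rw [if_pos hp, List.find?_cons_of_neg (by simpa using hp), List.find?_append]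
    cases (backwardCandidates k p).find? (· ∉ occ) <;> rfl
  · rw [if_neg hp, List.find?_cons_of_pos (by simpa using hp)]

theorem find?_effectiveCandidates_eq_none {n k p : ℕ} {occ : Finset ℕ} (hp : 1 ≤ p)
    (hpk : p ≤ k) (hblocked : Icc 1 p ⊆ occ) :
    (effectiveCandidates n k p).find? (· ∉ occ) = none := by
  simp only [List.find?_eq_none, decide_eq_true_eq, not_not]
  intro x hx
  simp only [effectiveCandidates, if_neg (Nat.not_lt.mpr hpk), List.append_nil,
    List.mem_cons, mem_backwardCandidates] at hx
  exact hblocked (mem_Icc.mpr (by omega))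

theorem naplesSpot_eq_find?_effectiveCandidates {n k p : ℕ} {occ : Finset ℕ}
    (hp : p ∈ Icc 1 n) (hfree : p ≤ k → ¬ Icc 1 p ⊆ occ) :
    naplesSpot n k occ p = (effectiveCandidates n k p).find? (· ∉ occ) := by
  rw [mem_Icc] at hp
  rw [naplesSpot_eq_find?, effectiveCandidates]
  by_cases hpk : k < p
  · -- the forward search restarts at `p`, which is known to be occupied by then
    rw [if_pos hpk, show n + 1 - p = n - p + 1 by omega, List.range'_succ]
    by_cases hpo : p ∈ occ
    · simp only [List.find?_cons, List.find?_append, hpo, not_true_eq_false, decide_false]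
    · rw [List.find?_cons_of_pos (p := fun s => decide (s ∉ occ)) (by simpa using hpo),
        List.find?_cons_of_pos (p := fun s => decide (s ∉ occ)) (by simpa using hpo)]
  · obtain ⟨x, hx, hxo⟩ := not_subset.mp (hfree (by omega))
    have hfound : ((p :: backwardCandidates k p).find? (· ∉ occ)).isSome := by
      refine List.find?_isSome.mpr ⟨x, ?_, by simpa using hxo⟩
      rw [List.mem_cons, mem_backwardCandidates]
      rw [mem_Icc] at hx
      omega
    obtain ⟨s, hs⟩ := Option.isSome_iff_exists.mp hfound
    rw [if_neg hpk, List.append_nil, ← List.cons_append, List.find?_append, hs]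
    rfl

theorem naplesContainedAux_cons {n k p : ℕ} (hp : p ∈ Icc 1 n) (rest : List ℕ)
    (occ : Finset ℕ) :
    naplesContainedAux n k (p :: rest) occ =
      ((effectiveCandidates n k p).find? (· ∉ occ)).elim false
        fun s => naplesContainedAux n k rest (insert s occ) := by
  rw [naplesContainedAux]
  by_cases hblocked : p ≤ k ∧ Icc 1 p ⊆ occ
  · rw [find?_effectiveCandidates_eq_none (mem_Icc.mp hp).1 hblocked.1 hblocked.2]
    simp [hblocked]
  · have hfree : p ≤ k → ¬ Icc 1 p ⊆ occ := fun h h' => hblocked ⟨h, h'⟩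
    rw [naplesSpot_eq_find?_effectiveCandidates hp hfree, decide_eq_true hfree, Bool.true_and]
    cases (effectiveCandidates n k p).find? (· ∉ occ) <;> rfl

theorem List.exists_map_range_eq_append_cons {α : Type*} (f : ℕ → α) {a m : ℕ} (h : a < m) :
    ∃ rest, (List.range m).map f = (List.range a).map f ++ f a :: rest := by
  obtain ⟨d, rfl⟩ := Nat.exists_eq_add_of_lt h
  exact ⟨(List.range d).map fun i => f (a + (i + 1)), by
    simp [List.range_add, List.range_succ_eq_map, Nat.add_assoc]⟩

theorem map_natCast_backwardCandidates {R : Type*} [AddGroupWithOne R] (k p : ℕ) :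
    (backwardCandidates k p).map (Nat.cast : ℕ → R) =
      (List.range (min k (p - 1))).map fun i => (p : R) - (i + 1 : ℕ) := by
  rw [backwardCandidates_eq_map_range, List.map_map]
  refine List.map_congr_left fun i hi => ?_
  rw [Function.comp_apply, Nat.cast_sub (by simp at hi; omega)]

theorem map_natCast_range' {R : Type*} [AddMonoidWithOne R] (p m : ℕ) :
    (List.range' (p + 1) m).map (Nat.cast : ℕ → R) =
      (List.range m).map fun i => (p : R) + (i + 1 : ℕ) := by
  rw [List.range'_eq_map_range, List.map_map]
  refine List.map_congr_left fun i _ => ?_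
  rw [Function.comp_apply, ← Nat.cast_add, Nat.add_right_comm, Nat.add_assoc]

def circCandidates (n k : ℕ) (p : ZMod (n + 1)) : List (ZMod (n + 1)) :=
  p :: ((List.range k).map (fun i => p - (i + 1 : ℕ)) ++
    (List.range n).map (fun i => p + (i + 1 : ℕ)))

def circSpot (n k : ℕ) (occ : Finset (ZMod (n + 1))) (p : ZMod (n + 1)) : ZMod (n + 1) :=
  ((circCandidates n k p).find? (· ∉ occ)).getD p

def circPark (n k : ℕ) : List (ZMod (n + 1)) → Finset (ZMod (n + 1)) → Finset (ZMod (n + 1))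
  | [], occ => occ
  | p :: rest, occ => circPark n k rest (insert (circSpot n k occ p) occ)

def circOccupied (n k : ℕ) (b : Fin n → ZMod (n + 1)) : Finset (ZMod (n + 1)) :=
  circPark n k (List.ofFn b) ∅

section CircularParking

variable {n k : ℕ}

theorem mem_circCandidates (p x : ZMod (n + 1)) : x ∈ circCandidates n k p := by
  by_cases hx : x = p
  · exact hx ▸ List.mem_cons_self
  have hval : (x - p).val ≠ 0 := fun h => hx (sub_eq_zero.mp ((ZMod.val_eq_zero _).mp h))
  refine List.mem_cons_of_mem _ (List.mem_append_right _
    (List.mem_map.mpr ⟨(x - p).val - 1, List.mem_range.mpr ?_, ?_⟩))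
  · have := ZMod.val_lt (x - p)
    omega
  · rw [Nat.sub_add_cancel (Nat.one_le_iff_ne_zero.mpr hval), ZMod.natCast_zmod_val]
    ring

theorem circSpot_of_notMem {occ : Finset (ZMod (n + 1))} {p : ZMod (n + 1)} (hp : p ∉ occ) :
    circSpot n k occ p = p := by
  rw [circSpot, circCandidates, List.find?_cons_of_pos (by simpa using hp)]
  rfl

theorem circSpot_notMem {occ : Finset (ZMod (n + 1))} (hocc : occ ≠ univ) (p : ZMod (n + 1)) :
    circSpot n k occ p ∉ occ := by
  obtain ⟨x, hx⟩ := not_forall.mp (mt eq_univ_iff_forall.mpr hocc)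
  have hfound : ((circCandidates n k p).find? (· ∉ occ)).isSome :=
    List.find?_isSome.mpr ⟨x, mem_circCandidates p x, by simpa using hx⟩
  obtain ⟨s, hs⟩ := Option.isSome_iff_exists.mp hfound
  rw [circSpot, hs]
  simpa using List.find?_some hs

theorem subset_circPark (l : List (ZMod (n + 1))) (occ : Finset (ZMod (n + 1))) :
    occ ⊆ circPark n k l occ := by
  induction l generalizing occ with
  | nil => exact subset_rfl
  | cons p rest ih => exact (subset_insert _ _).trans (ih _)

theorem mem_circPark_of_mem {l : List (ZMod (n + 1))} {p : ZMod (n + 1)} (hp : p ∈ l)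
    (occ : Finset (ZMod (n + 1))) : p ∈ circPark n k l occ := by
  induction l generalizing occ with
  | nil => simp at hp
  | cons q rest ih =>
    rw [circPark]
    rcases List.mem_cons.mp hp with rfl | hp
    · by_cases hpo : p ∈ occ
      · exact subset_circPark _ _ (mem_insert_of_mem hpo)
      · rw [circSpot_of_notMem hpo]
        exact subset_circPark rest _ (mem_insert_self _ _)
    · exact ih hp _

theorem card_circPark (l : List (ZMod (n + 1))) (occ : Finset (ZMod (n + 1)))
    (h : #occ + l.length ≤ n + 1) : #(circPark n k l occ) = #occ + l.length := by
  induction l generalizing occ with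
  | nil => rfl
  | cons p rest ih =>
    have hocc : occ ≠ univ := by
      rintro rfl
      simp [card_univ, ZMod.card] at h
    have hnew := card_insert_of_notMem (circSpot_notMem (k := k) hocc p)
    rw [circPark, ih _ (by simp only [List.length_cons] at h; omega), hnew, List.length_cons]
    omega

theorem card_circOccupied (b : Fin n → ZMod (n + 1)) : #(circOccupied n k b) = n := by
  simp [circOccupied, card_circPark]

theorem circCandidates_add (p c : ZMod (n + 1)) :
    circCandidates n k (p + c) = (circCandidates n k p).map (· + c) := by
  simp only [circCandidates, List.map_cons, List.map_append, List.map_map]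
  congr 2 <;> apply List.map_congr_left <;> intro i _ <;> simp only [Function.comp_apply] <;> ring

theorem circSpot_add (occ : Finset (ZMod (n + 1))) (p c : ZMod (n + 1)) :
    circSpot n k (occ.image (· + c)) (p + c) = circSpot n k occ p + c := by
  have hpred : ((fun s => decide (s ∉ occ.image (· + c))) ∘ (· + c)) =
      fun s => decide (s ∉ occ) := by
    funext s
    simp
  rw [circSpot, circSpot, circCandidates_add, List.find?_map, hpred]
  cases (circCandidates n k p).find? (· ∉ occ) <;> rfl

theorem circPark_add (l : List (ZMod (n + 1))) (occ : Finset (ZMod (n + 1))) (c : ZMod (n + 1)) :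
    circPark n k (l.map (· + c)) (occ.image (· + c)) = (circPark n k l occ).image (· + c) := by
  induction l generalizing occ with
  | nil => rfl
  | cons p rest ih =>
    rw [List.map_cons, circPark, circPark, circSpot_add, ← ih, image_insert]

theorem circOccupied_add (b : Fin n → ZMod (n + 1)) (c : ZMod (n + 1)) :
    circOccupied n k (b + fun _ => c) = (circOccupied n k b).image (· + c) := by
  rw [circOccupied, circOccupied, ← image_empty (· + c), ← circPark_add, List.map_ofFn]
  rfl

end CircularParking

section Rotation

variable {n k : ℕ}

theorem existsUnique_notMem_circOccupied (b : Fin n → ZMod (n + 1)) :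
    ∃! x, x ∉ circOccupied n k b := by
  have hcard : #(circOccupied n k b)ᶜ = 1 := by
    rw [card_compl, ZMod.card, card_circOccupied]
    omega
  obtain ⟨x, hx⟩ := card_eq_one.mp hcard
  exact ⟨x, by simpa using hx.ge (mem_singleton_self x), fun y hy => by
    simpa using hx.le (mem_compl.mpr hy)⟩

def emptySpot (n k : ℕ) (b : Fin n → ZMod (n + 1)) : ZMod (n + 1) :=
  Fintype.choose _ (existsUnique_notMem_circOccupied (k := k) b)

theorem notMem_circOccupied_iff {b : Fin n → ZMod (n + 1)} {x : ZMod (n + 1)} :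
    x ∉ circOccupied n k b ↔ x = emptySpot n k b :=
  ⟨fun hx => (existsUnique_notMem_circOccupied b).unique hx
    (Fintype.choose_spec _ (existsUnique_notMem_circOccupied b)),
   fun hx => hx ▸ Fintype.choose_spec _ (existsUnique_notMem_circOccupied b)⟩

theorem emptySpot_add (b : Fin n → ZMod (n + 1)) (c : ZMod (n + 1)) :
    emptySpot n k (b + fun _ => c) = emptySpot n k b + c := by
  refine (notMem_circOccupied_iff.mp ?_).symm
  rw [circOccupied_add, mem_image]
  rintro ⟨x, hx, hxc⟩
  exact notMem_circOccupied_iff.mpr (add_right_cancel hxc) hx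

def rotationEquiv (n k : ℕ) :
    ZMod (n + 1) × {b : Fin n → ZMod (n + 1) // 0 ∉ circOccupied n k b} ≃
      (Fin n → ZMod (n + 1)) where
  toFun cb := cb.2.1 + fun _ => cb.1
  invFun b := (emptySpot n k b, ⟨b + fun _ => -emptySpot n k b, by
    rw [notMem_circOccupied_iff, emptySpot_add, add_neg_cancel]⟩)
  left_inv := by
    rintro ⟨c, b, hb⟩
    have hc : emptySpot n k (b + fun _ => c) = c := by
      rw [emptySpot_add, ← notMem_circOccupied_iff.mp hb, zero_add]
    ext <;> simp [hc]
  right_inv b := by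
    ext i
    simp

end Rotation

theorem card_filter_zero_notMem_circOccupied (n k : ℕ) :
    #{b : Fin n → ZMod (n + 1) | 0 ∉ circOccupied n k b} = (n + 1) ^ (n - 1) := by
  have h := Fintype.card_congr (rotationEquiv n k)
  rw [Fintype.card_prod, Fintype.card_subtype, ZMod.card, Fintype.card_fun, ZMod.card,
    Fintype.card_fin] at h
  cases n with
  | zero => simpa using h
  | succ m =>
    rw [pow_succ'] at h
    exact Nat.eq_of_mul_eq_mul_left (Nat.succ_pos _) h

section Correspondence

variable {n k : ℕ}

theorem exists_circCandidates_natCast_eq {p : ℕ} (hp : p ∈ Icc 1 n) :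
    ∃ rest, circCandidates n k p = (effectiveCandidates n k p).map Nat.cast ++ 0 :: rest := by
  rw [mem_Icc] at hp
  obtain ⟨fwdRest, hfwd⟩ := List.exists_map_range_eq_append_cons
    (fun i => (p : ZMod (n + 1)) + (i + 1 : ℕ)) (show n - p < n by omega)
  have hfwd0 : (p : ZMod (n + 1)) + (n - p + 1 : ℕ) = 0 := by
    rw [← Nat.cast_add, show p + (n - p + 1) = n + 1 by omega, ZMod.natCast_self]
  by_cases hpk : k < p
  · refine ⟨fwdRest, ?_⟩
    rw [circCandidates, effectiveCandidates, if_pos hpk, hfwd, hfwd0, List.map_cons,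
      List.map_append, map_natCast_backwardCandidates, map_natCast_range',
      show min k (p - 1) = k by omega, List.cons_append, List.append_assoc]
  · obtain ⟨bwdRest, hbwd⟩ := List.exists_map_range_eq_append_cons
      (fun i => (p : ZMod (n + 1)) - (i + 1 : ℕ)) (show p - 1 < k by omega)
    have hbwd0 : (p : ZMod (n + 1)) - (p - 1 + 1 : ℕ) = 0 := by
      rw [Nat.sub_add_cancel hp.1, sub_self]
    refine ⟨bwdRest ++ (List.range n).map fun i => (p : ZMod (n + 1)) + (i + 1 : ℕ), ?_⟩
    rw [circCandidates, effectiveCandidates, if_neg hpk, hbwd, hbwd0, List.append_nil,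
      List.map_cons, map_natCast_backwardCandidates, show min k (p - 1) = p - 1 by omega]
    simp

theorem natCast_mem_image_natCast_iff {occ : Finset ℕ} (hocc : ∀ y ∈ occ, y ≤ n) {x : ℕ}
    (hx : x ≤ n) : (x : ZMod (n + 1)) ∈ occ.image Nat.cast ↔ x ∈ occ := by
  refine ⟨fun h => ?_, mem_image_of_mem _⟩
  obtain ⟨y, hy, hyx⟩ := mem_image.mp h
  rw [ZMod.natCast_eq_natCast_iff', Nat.mod_eq_of_lt (Nat.lt_succ_of_le (hocc y hy)),
    Nat.mod_eq_of_lt (Nat.lt_succ_of_le hx)] at hyx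
  exact hyx ▸ hy

theorem zero_notMem_image_natCast {occ : Finset ℕ} (hocc : occ ⊆ Icc 1 n) :
    (0 : ZMod (n + 1)) ∉ occ.image Nat.cast := by
  rw [← Nat.cast_zero, natCast_mem_image_natCast_iff (fun y hy => (mem_Icc.mp (hocc hy)).2)
    (Nat.zero_le n)]
  exact fun h => by simpa using hocc h

theorem circSpot_image_natCast {occ : Finset ℕ} (hocc : occ ⊆ Icc 1 n) {p : ℕ}
    (hp : p ∈ Icc 1 n) :
    circSpot n k (occ.image Nat.cast) p =
      (((effectiveCandidates n k p).find? (· ∉ occ)).map Nat.cast).getD 0 := by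
  obtain ⟨rest, hrest⟩ := exists_circCandidates_natCast_eq (k := k) hp
  have hpred : ∀ x ∈ effectiveCandidates n k p,
      ((fun s => decide (s ∉ occ.image Nat.cast)) ∘ (Nat.cast : ℕ → ZMod (n + 1))) x =
        decide (x ∉ occ) := by
    intro x hx
    simp only [Function.comp_apply, natCast_mem_image_natCast_iff
      (fun y hy => (mem_Icc.mp (hocc hy)).2) (mem_Icc.mp (mem_effectiveCandidates hp hx)).2]
  rw [circSpot, hrest, List.find?_append, List.find?_map, List.find?_congr hpred,
    List.find?_cons_of_pos (by simpa using zero_notMem_image_natCast hocc)]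
  cases (effectiveCandidates n k p).find? (· ∉ occ) <;> rfl

theorem naplesContainedAux_iff_zero_notMem_circPark {l : List ℕ} (hl : ∀ p ∈ l, p ∈ Icc 1 n)
    {occ : Finset ℕ} (hocc : occ ⊆ Icc 1 n) :
    naplesContainedAux n k l occ = true ↔
      (0 : ZMod (n + 1)) ∉ circPark n k (l.map Nat.cast) (occ.image Nat.cast) := by
  induction l generalizing occ with
  | nil => simpa [naplesContainedAux, circPark] using zero_notMem_image_natCast hocc
  | cons p rest ih =>
    have hp := hl p List.mem_cons_self
    rw [naplesContainedAux_cons hp, List.map_cons, circPark, circSpot_image_natCast hocc hp]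
    cases hs : (effectiveCandidates n k p).find? (· ∉ occ) with
    | none =>
      simpa using subset_circPark _ _ (mem_insert_self _ _)
    | some s =>
      rw [Option.elim_some, Option.map_some, Option.getD_some, ← image_insert]
      exact ih (fun q hq => hl q (List.mem_cons_of_mem _ hq))
        (insert_subset (mem_effectiveCandidates hp (List.mem_of_find?_eq_some hs)) hocc)

def circPrefs (a : Fin n → Fin n) : Fin n → ZMod (n + 1) :=
  fun i => ((a i : ℕ) + 1 : ℕ)

theorem circPrefs_injective : Function.Injective (circPrefs (n := n)) := by
  intro a a' h
  funext i
  have hi := congrFun h i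
  rw [circPrefs, circPrefs, ZMod.natCast_eq_natCast_iff', Nat.mod_eq_of_lt (by simp),
    Nat.mod_eq_of_lt (by simp)] at hi
  exact Fin.ext (by omega)

theorem exists_circPrefs_eq {b : Fin n → ZMod (n + 1)} (hb : ∀ i, b i ≠ 0) :
    ∃ a, circPrefs a = b := by
  have hval (i : Fin n) : (b i).val ≠ 0 := fun h => hb i ((ZMod.val_eq_zero _).mp h)
  refine ⟨fun i => ⟨(b i).val - 1, ?_⟩, funext fun i => ?_⟩
  · have := ZMod.val_lt (b i)
    have := hval i
    omega
  · rw [circPrefs, Nat.sub_add_cancel (Nat.one_le_iff_ne_zero.mpr (hval i)),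
      ZMod.natCast_zmod_val]

-- `prefList` reaches `List ℕ` by lifting `List (Fin n)` through the list monad.
theorem prefList_eq_ofFn {m : ℕ} (a : Fin m → Fin n) :
    prefList a = List.ofFn fun i => (a i : ℕ) + 1 := by
  rw [prefList, bind_pure_comp, List.map_eq_map, List.map_map, List.map_ofFn]
  rfl

theorem mem_Bset_iff {a : Fin n → Fin n} :
    a ∈ Bset n n k ↔ (0 : ZMod (n + 1)) ∉ circOccupied n k (circPrefs a) := by
  have hl : ∀ p ∈ prefList a, p ∈ Icc 1 n := by
    simp only [prefList_eq_ofFn, List.mem_ofFn, mem_Icc]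
    rintro _ ⟨i, rfl⟩
    omega
  rw [Bset, mem_filter, naplesContainedAux_iff_zero_notMem_circPark hl (empty_subset _),
    image_empty, prefList_eq_ofFn, List.map_ofFn]
  simp only [mem_univ, true_and]
  rfl

end Correspondence

theorem card_Bset_eq_card_zero_notMem_circOccupied (n k : ℕ) :
    #(Bset n n k) = #{b : Fin n → ZMod (n + 1) | 0 ∉ circOccupied n k b} := by
  rw [← card_image_of_injective _ circPrefs_injective]
  congr 1
  ext b
  simp only [mem_image, mem_filter, mem_univ, true_and]
  refine ⟨fun ⟨a, ha, hab⟩ => hab ▸ mem_Bset_iff.mp ha, fun hb => ?_⟩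
  have hb0 (i : Fin n) : b i ≠ 0 := fun h =>
    hb (h ▸ mem_circPark_of_mem (List.mem_ofFn.mpr ⟨i, rfl⟩) _)
  obtain ⟨a, rfl⟩ := exists_circPrefs_eq hb0
  exact ⟨a, mem_Bset_iff.mpr hb, rfl⟩

theorem contained_count_general (n k : ℕ) :
    (Bset n n k).card = (n + 1) ^ (n - 1) := by
  rw [card_Bset_eq_card_zero_notMem_circOccupied, card_filter_zero_notMem_circOccupied]

theorem contained_count (n k : ℕ) (hn : 1 ≤ n) (hk : k ≤ n - 1) :
    (Bset n n k).card = (n + 1) ^ (n - 1) :=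
  contained_count_general n k
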